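/- Let G be a finite groupoid and (k(G_0), k(G_1)) the Hopf algebroid of functions on G. Hopf ideals (I_0, I_1) of (k(G_0), k(G_1)) are in bijective correspondence with subgroupoids of G: an ideal pair corresponds to subsets S_0 ⊆ G_0, S_1 ⊆ G_1 with I_i = span{f_x : x ∈ S_i}, and (I_0, I_1) is a Hopf ideal if and only if (G_0 \ S_0, G_1 \ S_1) is a subgroupoid of G. -/

import Mathlib

open TensorProduct

/-! ### A general framework for left bialgebroids and left Hopf algebroids.

Comultiplications are encoded at the level of chosen linear representatives in the
plain tensor product `H ⊗[k] H`; the tensor product over the base algebra `A` is the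
quotient by the `balancer` submodule spanned by the elements
`(t a * x) ⊗ y - x ⊗ (s a * y)`.  Axioms that genuinely live in `H ⊗_A H` are stated
modulo this submodule. -/

section BialgebroidFramework

variable (k A H : Type) [CommRing k] [Ring A] [Ring H] [Algebra k A] [Algebra k H]

/-- The submodule of `H ⊗[k] H` whose quotient is `H ⊗_A H` for the bimodule
structure `a · h · a' = s(a) t(a') h`. -/
def balancer (s : A →ₐ[k] H) (t : A →ₗ[k] H) : Submodule k (H ⊗[k] H) :=
  Submodule.span k {z | ∃ (a : A) (x y : H), z = (t a * x) ⊗ₜ[k] y - x ⊗ₜ[k] (s a * y)}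

/-- The analogous submodule for the triple tensor product. -/
def balancer3 (s : A →ₐ[k] H) (t : A →ₗ[k] H) : Submodule k (H ⊗[k] (H ⊗[k] H)) :=
  Submodule.span k
    ({z | ∃ (a : A) (x y w : H), z = (t a * x) ⊗ₜ[k] (y ⊗ₜ[k] w) - x ⊗ₜ[k] ((s a * y) ⊗ₜ[k] w)} ∪
     {z | ∃ (a : A) (x y w : H), z = x ⊗ₜ[k] ((t a * y) ⊗ₜ[k] w) - x ⊗ₜ[k] (y ⊗ₜ[k] (s a * w))})

/-- The submodule of `H ⊗[k] H` whose quotient is `H ⊗_{A^op} H`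
(balanced over the target map: `(x * t a) ⊗ y ~ x ⊗ (t a * y)`). -/
def opBalancer (t : A →ₗ[k] H) : Submodule k (H ⊗[k] H) :=
  Submodule.span k {z | ∃ (a : A) (x y : H), z = (x * t a) ⊗ₜ[k] y - x ⊗ₜ[k] (t a * y)}

/-- A left `A`-bialgebroid structure on the `k`-algebra `H`. -/
structure LeftBialgebroid where
  /-- the source map -/
  src : A →ₐ[k] H
  /-- the target map (an anti-algebra map) -/
  tgt : A →ₗ[k] H
  tgt_one : tgt 1 = 1
  tgt_mul : ∀ a b : A, tgt (a * b) = tgt b * tgt a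
  src_tgt_comm : ∀ a b : A, src a * tgt b = tgt b * src a
  /-- a linear representative of the comultiplication `H → H ⊗_A H` -/
  comul : H →ₗ[k] H ⊗[k] H
  /-- the counit -/
  counit : H →ₗ[k] A
  counit_one : counit 1 = 1
  counit_src : ∀ (a : A) (h : H), counit (src a * h) = a * counit h
  counit_tgt : ∀ (a : A) (h : H), counit (tgt a * h) = counit h * a
  counit_mul : ∀ g h : H, counit (g * h) = counit (g * src (counit h))
  comul_one : comul 1 - (1 : H) ⊗ₜ[k] (1 : H) ∈ balancer k A H src tgt
  comul_mul : ∀ g h : H, comul (g * h) - comul g * comul h ∈ balancer k A H src tgt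
  comul_bimod : ∀ (a a' : A) (h : H),
    comul (src a * (tgt a' * h)) -
      (TensorProduct.map (LinearMap.mulLeft k (src a)) (LinearMap.mulLeft k (tgt a')))
        (comul h) ∈ balancer k A H src tgt
  comul_coassoc : ∀ h : H,
    (TensorProduct.assoc k H H H) ((LinearMap.rTensor H comul) (comul h)) -
      (LinearMap.lTensor H comul) (comul h) ∈ balancer3 k A H src tgt
  comul_counit_left : ∀ h : H,
    (LinearMap.mul' k H) ((LinearMap.rTensor H (src.toLinearMap ∘ₗ counit)) (comul h)) = h
  comul_counit_right : ∀ h : H,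
    (LinearMap.mul' k H)
      ((LinearMap.rTensor H (tgt ∘ₗ counit)) ((TensorProduct.comm k H H) (comul h))) = h

variable {k A H}

/-- Two-sided ideals, encoded as `k`-submodules closed under multiplication. -/
structure IsTwoSidedIdeal (I : Submodule k H) : Prop where
  mul_mem_left : ∀ (h x : H), x ∈ I → h * x ∈ I
  mul_mem_right : ∀ (h x : H), x ∈ I → x * h ∈ I

variable (k H) in
/-- The image of `I ⊗ H` inside `H ⊗[k] H`. -/
def leftSlice (I : Submodule k H) : Submodule k (H ⊗[k] H) :=
  Submodule.span k {z | ∃ x ∈ I, ∃ y : H, z = x ⊗ₜ[k] y}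

variable (k H) in
/-- The image of `H ⊗ I` inside `H ⊗[k] H`. -/
def rightSlice (I : Submodule k H) : Submodule k (H ⊗[k] H) :=
  Submodule.span k {z | ∃ y : H, ∃ x ∈ I, z = y ⊗ₜ[k] x}

/-- `I` is a two-sided coideal of the `A`-coring `H`:
`Δ(I) ⊆ Im(I ⊗_A H + H ⊗_A I)` and `ε(I) = 0`. -/
structure IsCoideal (B : LeftBialgebroid k A H) (I : Submodule k H) : Prop where
  comul_mem : ∀ x ∈ I,
    B.comul x ∈ leftSlice k H I ⊔ rightSlice k H I ⊔ balancer k A H B.src B.tgt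
  counit_eq_zero : ∀ x ∈ I, B.counit x = 0

/-- A morphism of left bialgebroids over the same base `A`. -/
def IsBialgebroidHom {H' : Type} [Ring H'] [Algebra k H']
    (B : LeftBialgebroid k A H) (B' : LeftBialgebroid k A H') (f : H →ₐ[k] H') : Prop :=
  (∀ a : A, f (B.src a) = B'.src a) ∧ (∀ a : A, f (B.tgt a) = B'.tgt a) ∧
  (∀ h : H, B'.counit (f h) = B.counit h) ∧
  (∀ h : H, (TensorProduct.map f.toLinearMap f.toLinearMap) (B.comul h) - B'.comul (f h)
      ∈ balancer k A H' B'.src B'.tgt)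

variable (k A H) in
/-- A representative of the Galois map `β : H ⊗_{A^op} H → H ⊗_A H`,
`b ⊗ b' ↦ b₍₁₎ ⊗ b₍₂₎ b'`. -/
noncomputable def galoisRep (B : LeftBialgebroid k A H) : H ⊗[k] H →ₗ[k] H ⊗[k] H :=
  TensorProduct.lift
    (LinearMap.mk₂ k (fun b b' => B.comul b * ((1 : H) ⊗ₜ[k] b'))
      (by intros; simp [mul_add, add_mul, TensorProduct.tmul_add, TensorProduct.add_tmul, smul_mul_assoc, mul_smul_comm, ← TensorProduct.smul_tmul', TensorProduct.tmul_smul])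
      (by intros; simp [mul_add, add_mul, TensorProduct.tmul_add, TensorProduct.add_tmul, smul_mul_assoc, mul_smul_comm, ← TensorProduct.smul_tmul', TensorProduct.tmul_smul])
      (by intros; simp [mul_add, add_mul, TensorProduct.tmul_add, TensorProduct.add_tmul, smul_mul_assoc, mul_smul_comm, ← TensorProduct.smul_tmul', TensorProduct.tmul_smul])
      (by intros; simp [mul_add, add_mul, TensorProduct.tmul_add, TensorProduct.add_tmul, smul_mul_assoc, mul_smul_comm, ← TensorProduct.smul_tmul', TensorProduct.tmul_smul]))

/-- A left bialgebroid is a left Hopf algebroid (Schauenburg) when the Galois map,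
viewed as a map `H ⊗_{A^op} H → H ⊗_A H`, is bijective. -/
structure IsLeftHopf (B : LeftBialgebroid k A H) : Prop where
  descends : opBalancer k A H B.tgt ≤
    (balancer k A H B.src B.tgt).comap (galoisRep k A H B)
  bijective : Function.Bijective
    (Submodule.mapQ (opBalancer k A H B.tgt) (balancer k A H B.src B.tgt)
      (galoisRep k A H B) descends)

/-- The (left) Hopf condition for an ideal: for every `h ∈ I`,
`β⁻¹(h ⊗ 1)` lies in the image of `I ⊗_{A^op} H + H ⊗_{A^op} I`; equivalently there is a
representative `w` in the slices with `β(w) = h ⊗ 1` in `H ⊗_A H`. -/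
def HopfIdealCondition (B : LeftBialgebroid k A H) (I : Submodule k H) : Prop :=
  ∀ h ∈ I, ∃ w ∈ leftSlice k H I ⊔ rightSlice k H I,
    galoisRep k A H B w - h ⊗ₜ[k] (1 : H) ∈ balancer k A H B.src B.tgt

/-- A Hopf ideal pair `(J, I)` of a left Hopf algebroid, allowing base change. -/
structure IsHopfIdealPair (B : LeftBialgebroid k A H)
    (J : Submodule k A) (I : Submodule k H) : Prop where
  idealJ : IsTwoSidedIdeal J
  idealI : IsTwoSidedIdeal I
  src_mem : ∀ a ∈ J, B.src a ∈ I
  tgt_mem : ∀ a ∈ J, B.tgt a ∈ I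
  comul_mem : ∀ x ∈ I,
    B.comul x ∈ leftSlice k H I ⊔ rightSlice k H I ⊔ balancer k A H B.src B.tgt
  counit_mem : ∀ x ∈ I, B.counit x ∈ J
  hopf : HopfIdealCondition B I

/-- An (invertible) antipode on a left bialgebroid. -/
structure Antipode (B : LeftBialgebroid k A H) where
  S : H ≃ₗ[k] H
  S_one : S 1 = 1
  S_mul : ∀ g h : H, S (g * h) = S h * S g
  S_src : ∀ a : A, S (B.src a) = B.tgt a
  antipode2 : ∀ b : H,
    (TensorProduct.lift (LinearMap.mk₂ k
        (fun x y => B.comul (S x) * (y ⊗ₜ[k] (1 : H)))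
        (by intros; simp [mul_add, add_mul, TensorProduct.tmul_add, TensorProduct.add_tmul, smul_mul_assoc, mul_smul_comm, ← TensorProduct.smul_tmul', TensorProduct.tmul_smul])
        (by intros; simp [mul_add, add_mul, TensorProduct.tmul_add, TensorProduct.add_tmul, smul_mul_assoc, mul_smul_comm, ← TensorProduct.smul_tmul', TensorProduct.tmul_smul])
        (by intros; simp [mul_add, add_mul, TensorProduct.tmul_add, TensorProduct.add_tmul, smul_mul_assoc, mul_smul_comm, ← TensorProduct.smul_tmul', TensorProduct.tmul_smul])
        (by intros; simp [mul_add, add_mul, TensorProduct.tmul_add, TensorProduct.add_tmul, smul_mul_assoc, mul_smul_comm, ← TensorProduct.smul_tmul', TensorProduct.tmul_smul])))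
      (B.comul b) - (1 : H) ⊗ₜ[k] (S b) ∈ balancer k A H B.src B.tgt
  antipode3 : ∀ b : H,
    (TensorProduct.lift (LinearMap.mk₂ k
        (fun x y => B.comul (S.symm y) * ((1 : H) ⊗ₜ[k] x))
        (by intros; simp [mul_add, add_mul, TensorProduct.tmul_add, TensorProduct.add_tmul, smul_mul_assoc, mul_smul_comm, ← TensorProduct.smul_tmul', TensorProduct.tmul_smul])
        (by intros; simp [mul_add, add_mul, TensorProduct.tmul_add, TensorProduct.add_tmul, smul_mul_assoc, mul_smul_comm, ← TensorProduct.smul_tmul', TensorProduct.tmul_smul])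
        (by intros; simp [mul_add, add_mul, TensorProduct.tmul_add, TensorProduct.add_tmul, smul_mul_assoc, mul_smul_comm, ← TensorProduct.smul_tmul', TensorProduct.tmul_smul])
        (by intros; simp [mul_add, add_mul, TensorProduct.tmul_add, TensorProduct.add_tmul, smul_mul_assoc, mul_smul_comm, ← TensorProduct.smul_tmul', TensorProduct.tmul_smul])))
      (B.comul b) - (S.symm b) ⊗ₜ[k] (1 : H) ∈ balancer k A H B.src B.tgt

end BialgebroidFramework

open CategoryTheory

section FunctionAlgebroid

/-- The set of arrows of a groupoid, bundled with their endpoints. -/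
abbrev Arw (G : Type) [Groupoid G] : Type := Σ p q : G, p ⟶ q

variable (k G : Type) [Field k] [Groupoid G] [Fintype G] [DecidableEq G]
variable [∀ p q : G, Fintype (p ⟶ q)] [∀ p q : G, DecidableEq (p ⟶ q)]

/-- Representative of the comultiplication of the function Hopf algebroid of a finite
groupoid: `Δ(f_e) = Σ_{e₂ ∘ e₁ = e} f_{e₁} ⊗ f_{e₂}`. -/
noncomputable def comulRep (g : Arw G → k) : TensorProduct k (Arw G → k) (Arw G → k) :=
  ∑ e₁ : Arw G, ∑ e₂ : Arw G,
    (if h : e₁.2.1 = e₂.1 then g ⟨e₁.1, e₂.2.1, e₁.2.2 ≫ eqToHom h ≫ e₂.2.2⟩ else 0) •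
      TensorProduct.tmul k (Pi.single e₁ 1 : Arw G → k) (Pi.single e₂ 1 : Arw G → k)

/-- `B` is the Hopf algebroid of functions on the finite groupoid `G`. -/
def IsFunctionAlgebroid (B : LeftBialgebroid k (G → k) (Arw G → k)) : Prop :=
  (∀ (g : G → k) (e : Arw G), B.src g e = g e.1) ∧
  (∀ (g : G → k) (e : Arw G), B.tgt g e = g e.2.1) ∧
  (∀ (g : Arw G → k) (p : G), B.counit g p = g ⟨p, p, 𝟙 p⟩) ∧
  (∀ g : Arw G → k,
    B.comul g - comulRep k G g ∈ balancer k (G → k) (Arw G → k) B.src B.tgt)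

/-- The span of the characteristic functions of the elements of `S`. -/
def deltaSpan (X : Type) [DecidableEq X] (S : Set X) : Submodule k (X → k) :=
  Submodule.span k ((fun x => (Pi.single x 1 : X → k)) '' S)

/-- `(T₀, T₁)` is a subgroupoid of `G`. -/
def IsSubgroupoidOn (T₀ : Set G) (T₁ : Set (Arw G)) : Prop :=
  (∀ e ∈ T₁, e.1 ∈ T₀ ∧ e.2.1 ∈ T₀) ∧
  (∀ p ∈ T₀, (⟨p, p, 𝟙 p⟩ : Arw G) ∈ T₁) ∧
  (∀ e₁ e₂ : Arw G, e₁ ∈ T₁ → e₂ ∈ T₁ → ∀ h : e₁.2.1 = e₂.1,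
    (⟨e₁.1, e₂.2.1, e₁.2.2 ≫ eqToHom h ≫ e₂.2.2⟩ : Arw G) ∈ T₁) ∧
  (∀ e ∈ T₁, (⟨e.2.1, e.1, Groupoid.inv e.2.2⟩ : Arw G) ∈ T₁)

end FunctionAlgebroid


section Aux

open CategoryTheory

variable {k : Type} [Field k]

example (G : Type) [Groupoid G] [Fintype G] [DecidableEq G]
  [∀ p q : G, Fintype (p ⟶ q)] [∀ p q : G, DecidableEq (p ⟶ q)] :
    Fintype (Arw G) := inferInstance

example (G : Type) [Groupoid G] [Fintype G] [DecidableEq G]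
  [∀ p q : G, Fintype (p ⟶ q)] [∀ p q : G, DecidableEq (p ⟶ q)] :
    DecidableEq (Arw G) := inferInstance

/-- The submodule of functions vanishing off `S`. -/
def vanishOff (X : Type) (S : Set X) : Submodule k (X → k) where
  carrier := {f | ∀ x ∉ S, f x = 0}
  add_mem' := by intro a b ha hb x hx; simp [ha x hx, hb x hx]
  zero_mem' := by intro x hx; rfl
  smul_mem' := by intro c a ha x hx; simp [ha x hx]

lemma mem_deltaSpan {X : Type} [Fintype X] [DecidableEq X] {S : Set X} {f : X → k} :
    f ∈ deltaSpan k X S ↔ ∀ x ∉ S, f x = 0 := by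
  constructor
  · intro hf
    have : deltaSpan k X S ≤ vanishOff X S := by
      rw [deltaSpan, Submodule.span_le]
      rintro g ⟨y, hy, rfl⟩ x hx
      exact Pi.single_eq_of_ne (fun h => hx (by rwa [h])) 1
    exact this hf
  · intro hf
    have hrep : f = ∑ x : X, f x • (Pi.single x 1 : X → k) := by
      funext y
      simp [Finset.sum_apply, Pi.single_apply]
    rw [hrep]
    refine Submodule.sum_mem _ fun x _ => ?_
    by_cases hx : x ∈ S
    · exact Submodule.smul_mem _ _ (Submodule.subset_span ⟨x, hx, rfl⟩)
    · simp [hf x hx]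

lemma deltaSpan_isIdeal (X : Type) [Fintype X] [DecidableEq X] (S : Set X) :
    IsTwoSidedIdeal (deltaSpan k X S) := by
  constructor
  · intro h x hx
    rw [mem_deltaSpan] at hx ⊢
    intro y hy
    simp [Pi.mul_apply, hx y hy]
  · intro h x hx
    rw [mem_deltaSpan] at hx ⊢
    intro y hy
    simp [Pi.mul_apply, hx y hy]

lemma ideal_eq_deltaSpan {X : Type} [Fintype X] [DecidableEq X] {J : Submodule k (X → k)}
    (hJ : IsTwoSidedIdeal J) : J = deltaSpan k X {x | (Pi.single x 1 : X → k) ∈ J} := by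
  apply le_antisymm
  · intro f hf
    rw [mem_deltaSpan]
    intro x hx
    by_contra hfx
    apply hx
    have h1 : f * (Pi.single x 1 : X → k) ∈ J := hJ.mul_mem_right _ _ hf
    have h2 : f * (Pi.single x 1 : X → k) = f x • (Pi.single x 1 : X → k) := by
      funext y
      by_cases hy : y = x
      · subst hy; simp [Pi.mul_apply]
      · simp [Pi.mul_apply, Pi.single_eq_of_ne hy]
    have := J.smul_mem (f x)⁻¹ (h2 ▸ h1)
    rwa [smul_smul, inv_mul_cancel₀ hfx, one_smul] at this
  · rw [deltaSpan, Submodule.span_le]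
    rintro g ⟨y, hy, rfl⟩
    exact hy

end Aux


section Eval
set_option linter.unusedSectionVars false

open CategoryTheory

variable {k G : Type} [Field k] [Groupoid G] [Fintype G] [DecidableEq G]
  [∀ p q : G, Fintype (p ⟶ q)] [∀ p q : G, DecidableEq (p ⟶ q)]

/-- Evaluation of a tensor at a pair of arrows. -/
noncomputable def evalPair (a b : Arw G) :
    ((Arw G → k) ⊗[k] (Arw G → k)) →ₗ[k] k :=
  TensorProduct.lift (LinearMap.mk₂ k (fun f g => f a * g b)
    (by intros; simp only [smul_eq_mul, Pi.add_apply, Pi.smul_apply]; ring)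
    (by intros; simp only [smul_eq_mul, Pi.add_apply, Pi.smul_apply]; ring)
    (by intros; simp only [smul_eq_mul, Pi.add_apply, Pi.smul_apply]; ring)
    (by intros; simp only [smul_eq_mul, Pi.add_apply, Pi.smul_apply]; ring))

@[simp] lemma evalPair_tmul (a b : Arw G) (f g : Arw G → k) :
    evalPair a b (f ⊗ₜ[k] g) = f a * g b := rfl

lemma balancer_le_ker {B : LeftBialgebroid k (G → k) (Arw G → k)}
    (hB : IsFunctionAlgebroid k G B) {a b : Arw G} (hab : a.2.1 = b.1) :
    balancer k (G → k) (Arw G → k) B.src B.tgt ≤ LinearMap.ker (evalPair a b) := by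
  rw [balancer, Submodule.span_le]
  rintro z ⟨c, x, y, rfl⟩
  simp only [SetLike.mem_coe, LinearMap.mem_ker, map_sub, evalPair_tmul, Pi.mul_apply,
    hB.1, hB.2.1, hab]
  ring

lemma single_expand (f : Arw G → k) :
    f = ∑ a : Arw G, f a • (Pi.single a 1 : Arw G → k) := by
  funext y
  simp [Finset.sum_apply, Pi.single_apply]

lemma tensor_expand (u : (Arw G → k) ⊗[k] (Arw G → k)) :
    u = ∑ a : Arw G, ∑ b : Arw G,
      evalPair a b u • ((Pi.single a 1 : Arw G → k) ⊗ₜ[k] (Pi.single b 1 : Arw G → k)) := by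
  induction u using TensorProduct.induction_on with
  | zero => simp
  | tmul f g =>
      conv_lhs => rw [single_expand f, single_expand g]
      rw [TensorProduct.sum_tmul]
      refine Finset.sum_congr rfl fun a _ => ?_
      rw [← TensorProduct.smul_tmul', TensorProduct.tmul_sum, Finset.smul_sum]
      refine Finset.sum_congr rfl fun b _ => ?_
      rw [TensorProduct.tmul_smul, smul_smul, evalPair_tmul]
  | add u v hu hv =>
      conv_lhs => rw [hu, hv]
      simp [map_add, add_smul, Finset.sum_add_distrib]

lemma single_tmul_single_mem_balancer {B : LeftBialgebroid k (G → k) (Arw G → k)}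
    (hB : IsFunctionAlgebroid k G B) {a b : Arw G} (hab : a.2.1 ≠ b.1) :
    (Pi.single a 1 : Arw G → k) ⊗ₜ[k] (Pi.single b 1 : Arw G → k) ∈
      balancer k (G → k) (Arw G → k) B.src B.tgt := by
  have h1 : B.tgt (Pi.single a.2.1 1) * (Pi.single a 1 : Arw G → k) = Pi.single a 1 := by
    funext e
    by_cases he : e = a
    · subst he; simp [Pi.mul_apply, hB.2.1]
    · simp [Pi.mul_apply, Pi.single_eq_of_ne he]
  have h2 : B.src (Pi.single a.2.1 1) * (Pi.single b 1 : Arw G → k) = 0 := by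
    funext e
    by_cases he : e = b
    · subst he
      simp [Pi.mul_apply, hB.1, Pi.single_eq_of_ne (Ne.symm hab)]
    · simp [Pi.mul_apply, Pi.single_eq_of_ne he]
  have key : (Pi.single a 1 : Arw G → k) ⊗ₜ[k] (Pi.single b 1 : Arw G → k) =
      (B.tgt (Pi.single a.2.1 1) * Pi.single a 1) ⊗ₜ[k] (Pi.single b 1 : Arw G → k) -
        (Pi.single a 1 : Arw G → k) ⊗ₜ[k] (B.src (Pi.single a.2.1 1) * Pi.single b 1) := by
    rw [h1, h2, TensorProduct.tmul_zero, sub_zero]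
  rw [key]
  exact Submodule.subset_span ⟨_, _, _, rfl⟩

lemma mem_balancer_iff {B : LeftBialgebroid k (G → k) (Arw G → k)}
    (hB : IsFunctionAlgebroid k G B) (u : (Arw G → k) ⊗[k] (Arw G → k)) :
    u ∈ balancer k (G → k) (Arw G → k) B.src B.tgt ↔
      ∀ a b : Arw G, a.2.1 = b.1 → evalPair a b u = 0 := by
  constructor
  · intro hu a b hab
    exact balancer_le_ker hB hab hu
  · intro h
    rw [tensor_expand u]
    refine Submodule.sum_mem _ fun a _ => Submodule.sum_mem _ fun b _ => ?_
    by_cases hab : a.2.1 = b.1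
    · simp [h a b hab]
    · exact Submodule.smul_mem _ _ (single_tmul_single_mem_balancer hB hab)


lemma evalPair_comulRep (a b : Arw G) (g : Arw G → k) :
    evalPair a b (comulRep k G g) =
      if h : a.2.1 = b.1 then g ⟨a.1, b.2.1, a.2.2 ≫ eqToHom h ≫ b.2.2⟩ else 0 := by
  rw [comulRep]
  simp only [map_sum, map_smul, evalPair_tmul, smul_eq_mul, Pi.single_apply,
    mul_ite, ite_mul, mul_one, one_mul, mul_zero, zero_mul, Finset.sum_ite_eq,
    Finset.mem_univ, if_true]

lemma evalPair_comul {B : LeftBialgebroid k (G → k) (Arw G → k)}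
    (hB : IsFunctionAlgebroid k G B) {a b : Arw G} (hab : a.2.1 = b.1) (g : Arw G → k) :
    evalPair a b (B.comul g) = g ⟨a.1, b.2.1, a.2.2 ≫ eqToHom hab ≫ b.2.2⟩ := by
  have h := balancer_le_ker hB hab (hB.2.2.2 g)
  rw [LinearMap.mem_ker, map_sub, sub_eq_zero] at h
  rw [h, evalPair_comulRep, dif_pos hab]

lemma galoisRep_tmul {B : LeftBialgebroid k (G → k) (Arw G → k)} (f g : Arw G → k) :
    galoisRep k (G → k) (Arw G → k) B (f ⊗ₜ[k] g) =
      B.comul f * ((1 : Arw G → k) ⊗ₜ[k] g) := rfl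

lemma evalPair_mul_one_tmul (a b : Arw G) (g : Arw G → k)
    (u : (Arw G → k) ⊗[k] (Arw G → k)) :
    evalPair a b (u * ((1 : Arw G → k) ⊗ₜ[k] g)) = evalPair a b u * g b := by
  induction u using TensorProduct.induction_on with
  | zero => simp
  | tmul x y =>
      rw [Algebra.TensorProduct.tmul_mul_tmul, evalPair_tmul, evalPair_tmul,
        mul_one, Pi.mul_apply, mul_assoc]
  | add u v hu hv => simp [add_mul, hu, hv]

lemma evalPair_galois {B : LeftBialgebroid k (G → k) (Arw G → k)}
    (hB : IsFunctionAlgebroid k G B) {a b : Arw G} (hab : a.2.1 = b.1) (f g : Arw G → k) :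
    evalPair a b (galoisRep k (G → k) (Arw G → k) B (f ⊗ₜ[k] g)) =
      f ⟨a.1, b.2.1, a.2.2 ≫ eqToHom hab ≫ b.2.2⟩ * g b := by
  rw [galoisRep_tmul, evalPair_mul_one_tmul, evalPair_comul hB hab]

lemma leftSlice_le_ker {S₁ : Set (Arw G)} {a : Arw G} (ha : a ∉ S₁) (b : Arw G) :
    leftSlice k (Arw G → k) (deltaSpan k (Arw G) S₁) ≤
      LinearMap.ker (evalPair a b) := by
  rw [leftSlice, Submodule.span_le]
  rintro z ⟨x, hx, y, rfl⟩
  simp [LinearMap.mem_ker, mem_deltaSpan.mp hx a ha]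

lemma rightSlice_le_ker {S₁ : Set (Arw G)} {b : Arw G} (hb : b ∉ S₁) (a : Arw G) :
    rightSlice k (Arw G → k) (deltaSpan k (Arw G) S₁) ≤
      LinearMap.ker (evalPair a b) := by
  rw [rightSlice, Submodule.span_le]
  rintro z ⟨y, x, hx, rfl⟩
  simp [LinearMap.mem_ker, mem_deltaSpan.mp hx b hb]


/-- Witness for the Hopf ideal condition at a delta function. -/
noncomputable def hopfW (e : Arw G) : (Arw G → k) ⊗[k] (Arw G → k) :=
  ∑ e' : Arw G, if h' : e.2.1 = e'.1 then
    (Pi.single (⟨e.1, e'.2.1, e.2.2 ≫ eqToHom h' ≫ e'.2.2⟩ : Arw G) 1 : Arw G → k) ⊗ₜ[k]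
      (Pi.single e' 1 : Arw G → k) else 0

lemma hopfW_mem {S₀ : Set G} {S₁ : Set (Arw G)} (hs : IsSubgroupoidOn G S₀ᶜ S₁ᶜ)
    {e : Arw G} (he : e ∈ S₁) :
    (hopfW e : (Arw G → k) ⊗[k] (Arw G → k)) ∈
      leftSlice k (Arw G → k) (deltaSpan k (Arw G) S₁) ⊔
        rightSlice k (Arw G → k) (deltaSpan k (Arw G) S₁) := by
  rw [hopfW]
  refine Submodule.sum_mem _ fun e' _ => ?_
  obtain ⟨p, q, α⟩ := e
  obtain ⟨u, v, ε⟩ := e'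
  by_cases h' : q = u
  · subst h'
    rw [dif_pos rfl]
    by_cases h2 : (⟨q, v, ε⟩ : Arw G) ∈ S₁
    · refine Submodule.mem_sup_right (Submodule.subset_span ?_)
      exact ⟨_, _, Submodule.subset_span ⟨_, h2, rfl⟩, rfl⟩
    · have ha' : (⟨p, v, α ≫ eqToHom rfl ≫ ε⟩ : Arw G) ∈ S₁ := by
        by_contra ha'
        have hinv := hs.2.2.2 _ h2
        have hcomp := hs.2.2.1 _ _ ha' hinv rfl
        have heq : (⟨p, q, (α ≫ eqToHom rfl ≫ ε) ≫ eqToHom rfl ≫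
            Groupoid.inv ε⟩ : Arw G) = ⟨p, q, α⟩ := by
          simp
        rw [heq] at hcomp
        exact hcomp he
      refine Submodule.mem_sup_left (Submodule.subset_span ?_)
      exact ⟨_, Submodule.subset_span ⟨_, ha', rfl⟩, _, rfl⟩
  · rw [dif_neg h']
    exact Submodule.zero_mem _

lemma galois_hopfW {B : LeftBialgebroid k (G → k) (Arw G → k)}
    (hB : IsFunctionAlgebroid k G B) (e : Arw G) :
    galoisRep k (G → k) (Arw G → k) B (hopfW e) -
      (Pi.single e 1 : Arw G → k) ⊗ₜ[k] (1 : Arw G → k) ∈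
        balancer k (G → k) (Arw G → k) B.src B.tgt := by
  rw [mem_balancer_iff hB]
  intro a b hab
  rw [map_sub, sub_eq_zero]
  rw [hopfW, map_sum, map_sum]
  have hterm : ∀ e' : Arw G,
      evalPair a b (galoisRep k (G → k) (Arw G → k) B
        (if h' : e.2.1 = e'.1 then
          (Pi.single (⟨e.1, e'.2.1, e.2.2 ≫ eqToHom h' ≫ e'.2.2⟩ : Arw G) 1 : Arw G → k) ⊗ₜ[k]
            (Pi.single e' 1 : Arw G → k) else 0)) =
      if h' : e.2.1 = e'.1 then
        (Pi.single (⟨e.1, e'.2.1, e.2.2 ≫ eqToHom h' ≫ e'.2.2⟩ : Arw G) 1 : Arw G → k)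
          ⟨a.1, b.2.1, a.2.2 ≫ eqToHom hab ≫ b.2.2⟩ * (Pi.single e' 1 : Arw G → k) b
      else 0 := by
    intro e'
    by_cases h' : e.2.1 = e'.1
    · rw [dif_pos h', dif_pos h', evalPair_galois hB hab]
    · rw [dif_neg h', dif_neg h', map_zero, map_zero]
  rw [Finset.sum_congr rfl fun e' _ => hterm e']
  rw [Finset.sum_eq_single b]
  · obtain ⟨p, q, α⟩ := e
    obtain ⟨pa, qa, γ⟩ := a
    obtain ⟨qb, rb, δ⟩ := b
    dsimp only at hab ⊢
    subst hab
    rw [evalPair_tmul]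
    by_cases hq : q = qa
    · subst hq
      rw [dif_pos rfl]
      by_cases hp : p = pa
      · subst hp
        by_cases hα : α = γ
        · subst hα
          simp
        · have h1 : (⟨p, rb, γ ≫ eqToHom rfl ≫ δ⟩ : Arw G) ≠
              ⟨p, rb, α ≫ eqToHom rfl ≫ δ⟩ := by
            intro hh
            apply hα
            simp only [Sigma.mk.inj_iff, heq_eq_eq, true_and] at hh
            have := congrArg (fun t => t ≫ Groupoid.inv δ) hh
            simpa using this.symm
          have h2 : (⟨p, q, γ⟩ : Arw G) ≠ ⟨p, q, α⟩ := by
            intro hh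
            apply hα
            simp only [Sigma.mk.inj_iff, heq_eq_eq, true_and] at hh
            exact hh.symm
          rw [Pi.single_eq_of_ne h1, Pi.single_eq_of_ne h2]
          simp
      · have h1 : (⟨pa, rb, γ ≫ eqToHom rfl ≫ δ⟩ : Arw G) ≠
            ⟨p, rb, α ≫ eqToHom rfl ≫ δ⟩ := fun hh => hp (congrArg Sigma.fst hh).symm
        have h2 : (⟨pa, q, γ⟩ : Arw G) ≠ ⟨p, q, α⟩ := fun hh => hp (congrArg Sigma.fst hh).symm
        rw [Pi.single_eq_of_ne h1, Pi.single_eq_of_ne h2]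
        simp
    · rw [dif_neg hq]
      have h2 : (⟨pa, qa, γ⟩ : Arw G) ≠ ⟨p, q, α⟩ := by
        intro hh
        exact hq (congrArg (fun z => z.2.1) hh).symm
      rw [Pi.single_eq_of_ne h2]
      simp
  · intro e' _ hne
    by_cases h' : e.2.1 = e'.1
    · rw [dif_pos h', Pi.single_eq_of_ne (Ne.symm hne), mul_zero]
    · rw [dif_neg h']
  · simp


lemma backward_dir {B : LeftBialgebroid k (G → k) (Arw G → k)}
    (hB : IsFunctionAlgebroid k G B) {S₀ : Set G} {S₁ : Set (Arw G)}
    (hs : IsSubgroupoidOn G S₀ᶜ S₁ᶜ) :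
    IsHopfIdealPair B (deltaSpan k G S₀) (deltaSpan k (Arw G) S₁) := by
  refine ⟨deltaSpan_isIdeal G S₀, deltaSpan_isIdeal (Arw G) S₁, ?_, ?_, ?_, ?_, ?_⟩
  · -- src_mem
    intro a ha
    rw [mem_deltaSpan] at ha ⊢
    intro e he
    rw [hB.1]
    exact ha e.1 (hs.1 e he).1
  · -- tgt_mem
    intro a ha
    rw [mem_deltaSpan] at ha ⊢
    intro e he
    rw [hB.2.1]
    exact ha e.2.1 (hs.1 e he).2
  · -- comul_mem
    intro x hx
    have h1 := hB.2.2.2 x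
    have h2 : comulRep k G x ∈
        leftSlice k (Arw G → k) (deltaSpan k (Arw G) S₁) ⊔
          rightSlice k (Arw G → k) (deltaSpan k (Arw G) S₁) := by
      rw [comulRep]
      refine Submodule.sum_mem _ fun e₁ _ => Submodule.sum_mem _ fun e₂ _ => ?_
      by_cases h : e₁.2.1 = e₂.1
      · rw [dif_pos h]
        by_cases hm1 : e₁ ∈ S₁
        · exact Submodule.smul_mem _ _ (Submodule.mem_sup_left (Submodule.subset_span
            ⟨_, Submodule.subset_span ⟨_, hm1, rfl⟩, _, rfl⟩))
        · by_cases hm2 : e₂ ∈ S₁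
          · exact Submodule.smul_mem _ _ (Submodule.mem_sup_right (Submodule.subset_span
              ⟨_, _, Submodule.subset_span ⟨_, hm2, rfl⟩, rfl⟩))
          · rw [mem_deltaSpan.mp hx _ (hs.2.2.1 e₁ e₂ hm1 hm2 h), zero_smul]
            exact Submodule.zero_mem _
      · rw [dif_neg h, zero_smul]
        exact Submodule.zero_mem _
    have hrw : B.comul x = comulRep k G x + (B.comul x - comulRep k G x) := by abel
    rw [hrw]
    exact Submodule.add_mem _ (Submodule.mem_sup_left h2) (Submodule.mem_sup_right h1)
  · -- counit_mem
    intro x hx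
    rw [mem_deltaSpan] at hx ⊢
    intro p hp
    rw [hB.2.2.1]
    exact hx _ (hs.2.1 p hp)
  · -- hopf
    intro h hh
    have key : deltaSpan k (Arw G) S₁ ≤
        Submodule.comap ((TensorProduct.mk k (Arw G → k) (Arw G → k)).flip (1 : Arw G → k))
          (Submodule.map (galoisRep k (G → k) (Arw G → k) B)
            (leftSlice k (Arw G → k) (deltaSpan k (Arw G) S₁) ⊔
              rightSlice k (Arw G → k) (deltaSpan k (Arw G) S₁)) ⊔
            balancer k (G → k) (Arw G → k) B.src B.tgt) := by
      rw [deltaSpan, Submodule.span_le]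
      rintro g ⟨e, he, rfl⟩
      simp only [SetLike.mem_coe, Submodule.mem_comap, LinearMap.flip_apply,
        TensorProduct.mk_apply]
      rw [Submodule.mem_sup]
      refine ⟨galoisRep k (G → k) (Arw G → k) B (hopfW e),
        Submodule.mem_map_of_mem (hopfW_mem (S₀ := S₀) hs he),
        -(galoisRep k (G → k) (Arw G → k) B (hopfW e) -
          (Pi.single e 1 : Arw G → k) ⊗ₜ[k] (1 : Arw G → k)),
        Submodule.neg_mem _ (galois_hopfW hB e), by abel⟩
    have hmem := key hh
    simp only [Submodule.mem_comap, LinearMap.flip_apply, TensorProduct.mk_apply] at hmem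
    rw [Submodule.mem_sup] at hmem
    obtain ⟨u, hu, v, hv, huv⟩ := hmem
    obtain ⟨w, hw, rfl⟩ := hu
    refine ⟨w, hw, ?_⟩
    have hdiff : galoisRep k (G → k) (Arw G → k) B w - h ⊗ₜ[k] (1 : Arw G → k) = -v := by
      rw [← huv]; abel
    rw [hdiff]
    exact Submodule.neg_mem _ hv

lemma forward_dir {B : LeftBialgebroid k (G → k) (Arw G → k)}
    (hB : IsFunctionAlgebroid k G B) {S₀ : Set G} {S₁ : Set (Arw G)}
    (hp : IsHopfIdealPair B (deltaSpan k G S₀) (deltaSpan k (Arw G) S₁)) :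
    IsSubgroupoidOn G S₀ᶜ S₁ᶜ := by
  have hid : ∀ p : G, (⟨p, p, 𝟙 p⟩ : Arw G) ∈ S₁ → p ∈ S₀ := by
    intro p hidp
    by_contra hq
    have := mem_deltaSpan.mp
      (hp.counit_mem _ (Submodule.subset_span ⟨_, hidp, rfl⟩)) p hq
    rw [hB.2.2.1] at this
    simp at this
  have htgt : ∀ (q : G), q ∈ S₀ → ∀ e : Arw G, e.2.1 = q → e ∈ S₁ := by
    intro q hq e heq
    by_contra he
    have := mem_deltaSpan.mp
      (hp.tgt_mem (Pi.single q 1) (Submodule.subset_span ⟨q, hq, rfl⟩)) e he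
    rw [hB.2.1, heq] at this
    simp at this
  refine ⟨?_, ?_, ?_, ?_⟩
  · intro e he
    constructor
    · intro h1
      apply he
      by_contra hcon
      exact hcon (by
        have := mem_deltaSpan.mp
          (hp.src_mem (Pi.single e.1 1) (Submodule.subset_span ⟨e.1, h1, rfl⟩)) e he
        rw [hB.1] at this
        simp at this)
    · intro h1
      exact he (htgt _ h1 e rfl)
  · intro p hp0 hidp
    exact hp0 (hid p hidp)
  · intro e₁ e₂ h1 h2 h hc
    have hm := hp.comul_mem _ (Submodule.subset_span ⟨_, hc, rfl⟩)
    have hker : leftSlice k (Arw G → k) (deltaSpan k (Arw G) S₁) ⊔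
        rightSlice k (Arw G → k) (deltaSpan k (Arw G) S₁) ⊔
        balancer k (G → k) (Arw G → k) B.src B.tgt ≤
          LinearMap.ker (evalPair e₁ e₂) :=
      sup_le (sup_le (leftSlice_le_ker h1 e₂) (rightSlice_le_ker h2 e₁))
        (balancer_le_ker hB h)
    have h0 := hker hm
    rw [LinearMap.mem_ker, evalPair_comul hB h] at h0
    simp at h0
  · intro e he hinv
    by_cases hidq : (⟨e.2.1, e.2.1, 𝟙 e.2.1⟩ : Arw G) ∈ S₁
    · exact he (htgt _ (hid _ hidq) e rfl)
    · obtain ⟨w, hw, hbal⟩ := hp.hopf _ (Submodule.subset_span ⟨_, hinv, rfl⟩)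
      set a : Arw G := ⟨e.2.1, e.1, Groupoid.inv e.2.2⟩ with ha
      have hab : a.2.1 = e.1 := rfl
      have h0 := balancer_le_ker hB hab hbal
      rw [LinearMap.mem_ker, map_sub, sub_eq_zero] at h0
      have hR : evalPair a e ((Pi.single a 1 : Arw G → k) ⊗ₜ[k] (1 : Arw G → k)) = 1 := by
        simp
      have hL : evalPair a e (galoisRep k (G → k) (Arw G → k) B w) = 0 := by
        have hker : leftSlice k (Arw G → k) (deltaSpan k (Arw G) S₁) ⊔
            rightSlice k (Arw G → k) (deltaSpan k (Arw G) S₁) ≤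
            LinearMap.ker ((evalPair a e).comp (galoisRep k (G → k) (Arw G → k) B)) := by
          refine sup_le ?_ ?_
          · rw [leftSlice, Submodule.span_le]
            rintro z ⟨x, hx, y, rfl⟩
            rw [SetLike.mem_coe, LinearMap.mem_ker, LinearMap.comp_apply,
              evalPair_galois hB hab]
            have harr : (⟨a.1, e.2.1, a.2.2 ≫ eqToHom hab ≫ e.2.2⟩ : Arw G) =
                ⟨e.2.1, e.2.1, 𝟙 e.2.1⟩ := by
              simp [ha]
              exact Groupoid.inv_comp e.2.2
            rw [harr, mem_deltaSpan.mp hx _ hidq, zero_mul]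
          · rw [rightSlice, Submodule.span_le]
            rintro z ⟨y, x, hx, rfl⟩
            rw [SetLike.mem_coe, LinearMap.mem_ker, LinearMap.comp_apply,
              evalPair_galois hB hab]
            rw [mem_deltaSpan.mp hx _ he, mul_zero]
        have := hker hw
        rwa [LinearMap.mem_ker, LinearMap.comp_apply] at this
      rw [hL, hR] at h0
      exact zero_ne_one h0

end Eval

/-- For a finite groupoid `G` and the Hopf algebroid of functions
`(k(G₀), k(G₁))`, Hopf ideals correspond bijectively to subgroupoids of `G`: every pair
of two-sided ideals is spanned by characteristic functions of subsets `S₀ ⊆ G₀`,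
`S₁ ⊆ G₁`, and such a pair is a Hopf ideal iff `(G₀ \ S₀, G₁ \ S₁)` is a subgroupoid. -/
theorem statement5
    (k G : Type) [Field k] [Groupoid G] [Fintype G] [DecidableEq G]
    [∀ p q : G, Fintype (p ⟶ q)] [∀ p q : G, DecidableEq (p ⟶ q)]
    (B : LeftBialgebroid k (G → k) (Arw G → k))
    (hB : IsFunctionAlgebroid k G B) :
    (∀ (S₀ : Set G) (S₁ : Set (Arw G)),
      IsHopfIdealPair B (deltaSpan k G S₀) (deltaSpan k (Arw G) S₁) ↔
        IsSubgroupoidOn G S₀ᶜ S₁ᶜ) ∧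
    (∀ (J : Submodule k (G → k)) (I : Submodule k (Arw G → k)),
      IsHopfIdealPair B J I →
        ∃ (S₀ : Set G) (S₁ : Set (Arw G)),
          J = deltaSpan k G S₀ ∧ I = deltaSpan k (Arw G) S₁) := by
  exact ⟨fun S₀ S₁ => ⟨fun hp => forward_dir hB hp, fun hs => backward_dir hB hs⟩,
    fun J I h => ⟨_, _, ideal_eq_deltaSpan h.idealJ, ideal_eq_deltaSpan h.idealI⟩⟩
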